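/- Let V = 𝔽₂³ and S = {(0,0,1), (1,1,0), (0,1,0)} ⊆ V. Then the cubelike graph Γ = Cay(V, S) has PEST from the edge ((0,0,0), (0,0,1)) to the edge ((1,0,1), (1,0,0)) at time π/2. -/

import Mathlib

open Matrix Finset

noncomputable section

/-- The adjacency matrix of the Cayley (cubelike) graph `Cay(G, S)`. -/
def adjMatrix {G : Type*} [AddCommGroup G] [Fintype G] [DecidableEq G]
    (S : Finset G) : Matrix G G ℂ :=
  fun u v => if u + v ∈ S then 1 else 0

/-- The transfer matrix `H(t) = exp(i t A)`. -/
def transferMatrix {G : Type*} [AddCommGroup G] [Fintype G] [DecidableEq G]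
    (S : Finset G) (t : ℝ) : Matrix G G ℂ :=
  NormedSpace.exp (Complex.I • ((t : ℂ) • adjMatrix S))

/-- The standard basis vector `e_a` of `ℂ^V`. -/
def stdBasis {G : Type*} [DecidableEq G] (a : G) : G → ℂ :=
  fun v => if v = a then 1 else 0

/-- Perfect edge state transfer from the edge `(a,b)` to the edge `(c,d)` at time `t`:
`|(1/2)(e_c - e_d)ᵀ H(t)(e_a - e_b)|² = 1`. -/
def hasPEST {G : Type*} [AddCommGroup G] [Fintype G] [DecidableEq G]
    (S : Finset G) (a b c d : G) (t : ℝ) : Prop :=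
  ‖(1 / 2 : ℂ) * dotProduct (stdBasis c - stdBasis d)
      (transferMatrix S t *ᵥ (stdBasis a - stdBasis b))‖ ^ 2 = 1

/-- The eigenvalue `λ_x = ∑_{s ∈ S} (-1)^{x·s}` of a cubelike graph. -/
def lam {m : ℕ} (S : Finset (Fin m → ZMod 2)) (x : Fin m → ZMod 2) : ℤ :=
  ∑ s ∈ S, (-1) ^ (x ⬝ᵥ s).val

/-! In an elementary abelian 2-group the adjacency matrix of `Cay(G, S)` is the sum of the
pairwise commuting involutions `P_s : e_a ↦ e_(a + s)`, `s ∈ S`. An involution satisfies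
`exp(i θ P) = cos θ + i sin θ P`, so `H(π/2) = ∏ exp(i π/2 P_s) = i^|S| P_σ` with `σ = ∑ S`:
at time `π/2` every edge `(a, b)` is carried, up to a phase, onto the edge `(a + σ, b + σ)`.
For `S = {001, 110, 010}` we get `σ = 101`. -/

theorem ZModModule.add_eq_iff_eq_add {G : Type*} [AddCommGroup G] [Module (ZMod 2) G]
    (u v s : G) : u + v = s ↔ v = u + s := by
  constructor <;> rintro rfl <;> simp [← add_assoc, ZModModule.add_self]

theorem stdBasis_eq_pi_single {G : Type*} [DecidableEq G] (a : G) :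
    stdBasis a = Pi.single a 1 :=
  funext fun v => (Pi.single_apply a 1 v).symm

theorem stdBasis_sub_dotProduct_self {G : Type*} [Fintype G] [DecidableEq G] {c d : G}
    (hcd : c ≠ d) : (stdBasis c - stdBasis d) ⬝ᵥ (stdBasis c - stdBasis d) = 2 := by
  simp [stdBasis_eq_pi_single, dotProduct_sub, hcd, hcd.symm]
  norm_num

section Involution

variable {𝔸 : Type*} [Ring 𝔸] [Algebra ℂ 𝔸] [TopologicalSpace 𝔸] [IsTopologicalRing 𝔸]
  [ContinuousSMul ℂ 𝔸] [T2Space 𝔸] {P : 𝔸}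

theorem exp_smul_of_mul_self_eq_one (hP : P * P = 1) (c : ℂ) :
    NormedSpace.exp (c • P) = Complex.cosh c • 1 + Complex.sinh c • P := by
  have hpow_even (k : ℕ) : P ^ (2 * k) = 1 := by rw [pow_mul, sq, hP, one_pow]
  have hpow_odd (k : ℕ) : P ^ (2 * k + 1) = P := by rw [pow_succ, hpow_even, one_mul]
  rw [NormedSpace.exp_eq_tsum ℂ]
  refine HasSum.tsum_eq (HasSum.even_add_odd ?_ ?_)
  · convert (Complex.hasSum_cosh c).smul_const (1 : 𝔸) using 2 with k
    rw [smul_pow, hpow_even, smul_smul, div_eq_inv_mul]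
  · convert (Complex.hasSum_sinh c).smul_const P using 2 with k
    rw [smul_pow, hpow_odd, smul_smul, div_eq_inv_mul]

theorem exp_pi_div_two_mul_I_smul_of_mul_self_eq_one (hP : P * P = 1) :
    NormedSpace.exp (((Real.pi / 2 : ℝ) * Complex.I) • P) = Complex.I • P := by
  rw [exp_smul_of_mul_self_eq_one hP, Complex.cosh_mul_I, Complex.sinh_mul_I,
    ← Complex.ofReal_cos, ← Complex.ofReal_sin, Real.cos_pi_div_two, Real.sin_pi_div_two]
  simp

end Involution

section Translation

variable {G : Type*} [AddCommGroup G] [DecidableEq G]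

def translationMatrix (s : G) : Matrix G G ℂ :=
  fun u v => if u + v = s then 1 else 0

theorem adjMatrix_eq_sum_translationMatrix [Fintype G] (S : Finset G) :
    adjMatrix S = ∑ s ∈ S, translationMatrix s := by
  ext u v
  simp [adjMatrix, translationMatrix, Matrix.sum_apply]

variable [Module (ZMod 2) G]

theorem translationMatrix_apply (s u v : G) :
    translationMatrix s u v = if v = u + s then 1 else 0 :=
  if_congr (ZModModule.add_eq_iff_eq_add u v s) rfl rfl

theorem translationMatrix_zero : translationMatrix (0 : G) = 1 := by
  ext u v
  simp [translationMatrix_apply, Matrix.one_apply, eq_comm]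

variable [Fintype G]

theorem translationMatrix_mul (s t : G) :
    translationMatrix s * translationMatrix t = translationMatrix (s + t) := by
  ext u w
  simp only [Matrix.mul_apply, translationMatrix_apply, ite_mul, one_mul, zero_mul,
    Finset.sum_ite_eq', Finset.mem_univ, if_true, add_assoc]

theorem translationMatrix_mul_self (s : G) : translationMatrix s * translationMatrix s = 1 := by
  rw [translationMatrix_mul, ZModModule.add_self, translationMatrix_zero]

theorem commute_translationMatrix (s t : G) :
    Commute (translationMatrix s) (translationMatrix t) := by
  rw [Commute, SemiconjBy, translationMatrix_mul, translationMatrix_mul, add_comm]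

theorem translationMatrix_mulVec_stdBasis (s a : G) :
    translationMatrix s *ᵥ stdBasis a = stdBasis (a + s) := by
  rw [stdBasis_eq_pi_single, stdBasis_eq_pi_single, mulVec_single]
  ext u
  simp [translationMatrix, Pi.single_apply, ← ZModModule.add_eq_iff_eq_add a u s, add_comm a u]

theorem exp_pi_div_two_mul_I_smul_sum_translationMatrix (S : Finset G) :
    NormedSpace.exp (((Real.pi / 2 : ℝ) * Complex.I) • ∑ s ∈ S, translationMatrix s)
      = Complex.I ^ #S • translationMatrix (∑ s ∈ S, s) := by
  induction S using Finset.induction_on with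
  | empty => simp [translationMatrix_zero]
  | insert a S ha ih =>
    have hcomm : Commute (((Real.pi / 2 : ℝ) * Complex.I) • translationMatrix a)
        (((Real.pi / 2 : ℝ) * Complex.I) • ∑ s ∈ S, translationMatrix s) :=
      ((Commute.sum_right _ _ _ fun s _ => commute_translationMatrix a s).smul_left _).smul_right _
    rw [Finset.sum_insert ha, smul_add, Matrix.exp_add_of_commute _ _ hcomm, ih,
      exp_pi_div_two_mul_I_smul_of_mul_self_eq_one (translationMatrix_mul_self a),
      smul_mul_smul_comm, translationMatrix_mul, Finset.sum_insert ha,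
      Finset.card_insert_of_notMem ha, pow_succ']

theorem transferMatrix_pi_div_two (S : Finset G) :
    transferMatrix S (Real.pi / 2) = Complex.I ^ #S • translationMatrix (∑ s ∈ S, s) := by
  rw [transferMatrix, smul_smul, mul_comm, adjMatrix_eq_sum_translationMatrix,
    exp_pi_div_two_mul_I_smul_sum_translationMatrix]

theorem hasPEST_pi_div_two (S : Finset G) {a b : G} (hab : a ≠ b) :
    hasPEST S a b (a + ∑ s ∈ S, s) (b + ∑ s ∈ S, s) (Real.pi / 2) := by
  have hne : a + ∑ s ∈ S, s ≠ b + ∑ s ∈ S, s := fun h => hab (add_right_cancel h)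
  rw [hasPEST, transferMatrix_pi_div_two, smul_mulVec, mulVec_sub,
    translationMatrix_mulVec_stdBasis, translationMatrix_mulVec_stdBasis, dotProduct_smul,
    stdBasis_sub_dotProduct_self hne]
  simp

end Translation

/-- The cubelike graph on `𝔽₂³` with connection set `S = {001, 110, 010}` has PEST
from the edge `(000, 001)` to the edge `(101, 100)` at time `π/2` (Example 2). -/
theorem hasPEST_example2 :
    hasPEST ({![0,0,1], ![1,1,0], ![0,1,0]} : Finset (Fin 3 → ZMod 2))
      ![0,0,0] ![0,0,1] ![1,0,1] ![1,0,0] (Real.pi / 2) := by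
  convert hasPEST_pi_div_two _ (show (![0,0,0] : Fin 3 → ZMod 2) ≠ ![0,0,1] by decide) using 2
    <;> decide

end
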